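/- Let (e_a) be a basis of 𝔤 with dual basis (e^a) of 𝔤*, let r = Σ_a (0,e^a) ⊗ (e_a,0) ∈ 𝔥 ⊗ 𝔥, and define δ : 𝔥 → 𝔥 ⊗ 𝔥 by δ(x) = (ad_x ⊗ id + id ⊗ ad_x)(r), where ad_x y = [x,y] in 𝔥. Then δ((ξ,0)) = 0 for all ξ ∈ 𝔤, and δ((0,α)) = Σ_{b,c} α([e_b,e_c]) (0,e^b) ⊗ (0,e^c) for all α ∈ 𝔤* (i.e. the coboundary cocommutator of r reproduces δ(J_a) = 0 and δ(P^a) = f_{bc}{}^a P^b ⊗ P^c). -/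

import Mathlib

/-!
STATEMENT 4: With `r = Σ_a P^a ⊗ J_a` (where `J_a = (e_a,0)`, `P^a = (0,e^a)`), the
coboundary cocommutator `δ(x) = (ad_x ⊗ id + id ⊗ ad_x)(r)`, i.e.
`δ(x) = Σ_a [x,P^a] ⊗ J_a + Σ_a P^a ⊗ [x,J_a]`, satisfies `δ((ξ,0)) = 0` for all `ξ ∈ 𝔤`
and `δ((0,α)) = Σ_{b,c} α([e_b,e_c]) (0,e^b) ⊗ (0,e^c)` for all `α ∈ 𝔤*`.
-/

open scoped TensorProduct

variable {L : Type*} [LieRing L] [LieAlgebra ℝ L]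

/-- The coadjoint action: `(coad ξ α) ζ = −α ⁅ξ, ζ⁆`. -/
noncomputable def coad (ξ : L) (α : Module.Dual ℝ L) : Module.Dual ℝ L :=
  - (α ∘ₗ (LieAlgebra.ad ℝ L ξ))

/-- The bracket of `𝔥 = 𝔤 ⊕ 𝔤*`. -/
noncomputable def hBracket (x y : L × Module.Dual ℝ L) : L × Module.Dual ℝ L :=
  (⁅x.1, y.1⁆, coad x.1 y.2 - coad y.1 x.2)

/-- `J_a = (e_a, 0)`. -/
noncomputable def Jgen {ι : Type*} (b : Module.Basis ι ℝ L) (a : ι) : L × Module.Dual ℝ L :=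
  (b a, 0)

/-- `P^a = (0, e^a)`. -/
noncomputable def Pgen {ι : Type*} [Fintype ι] [DecidableEq ι] (b : Module.Basis ι ℝ L) (a : ι) :
    L × Module.Dual ℝ L :=
  (0, b.dualBasis a)

/-- The cocommutator `δ(x) = (ad_x ⊗ id + id ⊗ ad_x)(r)` for `r = Σ_a P^a ⊗ J_a`. -/
noncomputable def deltaCocomm {ι : Type*} [Fintype ι] [DecidableEq ι] (b : Module.Basis ι ℝ L)
    (x : L × Module.Dual ℝ L) :
    (L × Module.Dual ℝ L) ⊗[ℝ] (L × Module.Dual ℝ L) :=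
  (∑ a : ι, hBracket x (Pgen b a) ⊗ₜ[ℝ] Jgen b a)
    + ∑ a : ι, Pgen b a ⊗ₜ[ℝ] hBracket x (Jgen b a)

/-!
The element `r = ∑ₐ Pᵃ ⊗ Jₐ` is the image of the canonical element `∑ₐ eᵃ ⊗ eₐ` of `𝔤* ⊗ 𝔤`,
and the canonical element satisfies `(fᵀ ⊗ 1) r = (1 ⊗ f) r` for every endomorphism `f` of `𝔤`:
both sides equal `∑_{a,c} eᵃ(f e_c) eᶜ ⊗ eₐ`. For `x = (ξ, 0)` the two halves of `δ(x)` are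
`(coad ξ ⊗ 1) r = -((ad ξ)ᵀ ⊗ 1) r` and `(1 ⊗ ad ξ) r`, so they cancel. For `x = (0, α)` the
first half vanishes because `𝔤*` is an abelian ideal of `𝔥`, and `[(0, α), Jₐ] = (0, α ∘ ad eₐ)`,
whose coordinates in the dual basis are the structure constants `α [eₐ, e_c]`.
-/

namespace Module.Basis

variable {R M N ι : Type*} [CommSemiring R] [AddCommMonoid M] [Module R M] [AddCommMonoid N]
  [Module R N] [Fintype ι] [DecidableEq ι]

theorem sum_dualBasis_comp_bilin (b : Basis ι R M) (B : Module.Dual R M →ₗ[R] M →ₗ[R] N)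
    (f : M →ₗ[R] M) :
    ∑ a, B (b.dualBasis a ∘ₗ f) (b a) = ∑ a, B (b.dualBasis a) (f (b a)) := by
  have hdual (a : ι) : b.dualBasis a ∘ₗ f = ∑ c, b.repr (f (b c)) a • b.dualBasis c := by
    conv_lhs => rw [← b.dualBasis.sum_repr (b.dualBasis a ∘ₗ f)]
    simp
  calc ∑ a, B (b.dualBasis a ∘ₗ f) (b a)
      = ∑ a, ∑ c, b.repr (f (b c)) a • B (b.dualBasis c) (b a) := by
        simp only [hdual, map_sum, map_smul, LinearMap.sum_apply, LinearMap.smul_apply]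
    _ = ∑ c, B (b.dualBasis c) (∑ a, b.repr (f (b c)) a • b a) := by
        rw [Finset.sum_comm]; simp only [map_sum, map_smul]
    _ = ∑ a, B (b.dualBasis a) (f (b a)) := by simp only [b.sum_repr]

end Module.Basis

section Bracket

variable (ξ η : L) (α β : Module.Dual ℝ L)

@[simp]
theorem coad_apply (ζ : L) : coad ξ α ζ = -α ⁅ξ, ζ⁆ := rfl

@[simp]
theorem hBracket_inl_inl : hBracket ((ξ, 0) : L × Module.Dual ℝ L) (η, 0) = (⁅ξ, η⁆, 0) := by
  simp [hBracket, coad]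

@[simp]
theorem hBracket_inl_inr : hBracket ((ξ, 0) : L × Module.Dual ℝ L) (0, β) = (0, coad ξ β) := by
  simp [hBracket, coad]

@[simp]
theorem hBracket_inr_inl : hBracket ((0, α) : L × Module.Dual ℝ L) (η, 0) = (0, -coad η α) := by
  simp [hBracket, coad]

@[simp]
theorem hBracket_inr_inr : hBracket ((0, α) : L × Module.Dual ℝ L) (0, β) = 0 := by
  simp [hBracket, coad]

end Bracket

section Cocommutator

variable {ι : Type*} [Fintype ι] [DecidableEq ι] (b : Module.Basis ι ℝ L)

theorem inr_eq_sum_smul_Pgen (β : Module.Dual ℝ L) :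
    ((0, β) : L × Module.Dual ℝ L) = ∑ c, β (b c) • Pgen b c := by
  conv_lhs => rw [← b.dualBasis.sum_repr β]
  ext <;> simp [Pgen, Prod.fst_sum, Prod.snd_sum]

theorem deltaCocomm_inl (ξ : L) : deltaCocomm b ((ξ, 0) : L × Module.Dual ℝ L) = 0 := by
  let B : Module.Dual ℝ L →ₗ[ℝ] L →ₗ[ℝ] (L × Module.Dual ℝ L) ⊗[ℝ] (L × Module.Dual ℝ L) :=
    (TensorProduct.mk ℝ _ _).compl₁₂ (LinearMap.inr ℝ _ _) (LinearMap.inl ℝ _ _)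
  have inr_neg (β : Module.Dual ℝ L) : ((0, -β) : L × Module.Dual ℝ L) = -(0, β) := by simp
  calc deltaCocomm b ((ξ, 0) : L × Module.Dual ℝ L)
      = ∑ a, -(B (b.dualBasis a ∘ₗ LieAlgebra.ad ℝ L ξ) (b a))
          + ∑ a, B (b.dualBasis a) (LieAlgebra.ad ℝ L ξ (b a)) := by
        simp only [deltaCocomm, Pgen, Jgen, hBracket_inl_inl, hBracket_inl_inr, coad, inr_neg,
          TensorProduct.neg_tmul, B, LinearMap.compl₁₂_apply, TensorProduct.mk_apply,
          LinearMap.inr_apply, LinearMap.inl_apply, LieAlgebra.ad_apply]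
    _ = 0 := by
        rw [Finset.sum_neg_distrib (G := (L × Module.Dual ℝ L) ⊗[ℝ] (L × Module.Dual ℝ L)),
          b.sum_dualBasis_comp_bilin, neg_add_cancel]

theorem deltaCocomm_inr (α : Module.Dual ℝ L) :
    deltaCocomm b ((0, α) : L × Module.Dual ℝ L)
      = ∑ i, ∑ j, α ⁅b i, b j⁆ • (Pgen b i ⊗ₜ[ℝ] Pgen b j) := by
  rw [deltaCocomm, Finset.sum_eq_zero fun a _ => by simp [Pgen], zero_add]
  refine Finset.sum_congr rfl fun i _ => ?_
  rw [Jgen, hBracket_inr_inl, inr_eq_sum_smul_Pgen b, TensorProduct.tmul_sum]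
  simp [TensorProduct.tmul_smul]

end Cocommutator

theorem deltaCocomm_eval {ι : Type*} [Fintype ι] [DecidableEq ι] (b : Module.Basis ι ℝ L) :
    (∀ ξ : L, deltaCocomm b ((ξ, 0) : L × Module.Dual ℝ L) = 0) ∧
    (∀ α : Module.Dual ℝ L,
      deltaCocomm b ((0, α) : L × Module.Dual ℝ L)
        = ∑ i : ι, ∑ j : ι, α ⁅b i, b j⁆ • (Pgen b i ⊗ₜ[ℝ] Pgen b j)) :=
  ⟨deltaCocomm_inl b, deltaCocomm_inr b⟩
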